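/- arXiv:2001.05998 — 2 statements merged into one kernel-verified Lean document; each statement's English description precedes it below -/
import Mathlib

section
/- Let H be a T×K matrix whose columns are constant on each block of a partition {G_1,...,G_P} of {1,...,K}, let ρ = gcd(|G_1|,...,|G_P|), and let M ⊆ {1,...,K} be any subset with |M ∩ G_p| = |G_p|/ρ for all p. Then M satisfies the latent-variable privacy condition (1/|M|)·H·b_M = (1/K)·H·𝟙, and |M| = K/ρ. -/
/-!
The sampled set `M` takes exactly a `1/ρ` fraction of every group. Since the columns of `H` are
constant on a group, summing them over `M ∩ G_p` gives `1/ρ` times their sum over `G_p`, so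
`ρ · H b_M = H 𝟙`; counting the same way gives `ρ · |M| = K`. Dividing one identity by the
other yields the privacy condition.
-/

noncomputable def indVec {K : ℕ} (S : Finset (Fin K)) : Fin K → ℝ :=
  fun i => if i ∈ S then 1 else 0

open Finset

namespace Finset

variable {ι κ M : Type*} [AddCommMonoid M]

theorem nsmul_sum_eq_sum_of_card_eq {f : ι → M} {S G : Finset ι} (hSG : S ⊆ G)
    (hf : ∀ i ∈ G, ∀ j ∈ G, f i = f j) {n : ℕ} (hn : n * #S = #G) :
    n • ∑ i ∈ S, f i = ∑ i ∈ G, f i := by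
  rcases S.eq_empty_or_nonempty with rfl | ⟨c, hc⟩
  · rw [card_empty, mul_zero, eq_comm, card_eq_zero] at hn
    simp [hn]
  · rw [sum_eq_card_nsmul fun i hi => hf i (hSG hi) c (hSG hc),
      sum_eq_card_nsmul fun i hi => hf i hi c (hSG hc), smul_smul, hn]

variable [Fintype κ] [DecidableEq ι] {G : κ → Finset ι}

theorem sum_eq_sum_sum_inter_of_cover (hdisj : ∀ p q, p ≠ q → Disjoint (G p) (G q))
    (hcover : ∀ i, ∃ p, i ∈ G p) (s : Finset ι) (f : ι → M) :
    ∑ i ∈ s, f i = ∑ p, ∑ i ∈ s ∩ G p, f i := by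
  have hs : s = univ.biUnion fun p => s ∩ G p := by
    ext i
    simpa using fun _ => hcover i
  rw [← sum_biUnion fun p _ q _ hpq => (hdisj p q hpq).mono inter_subset_right inter_subset_right,
    ← hs]

theorem card_eq_sum_card_inter_of_cover (hdisj : ∀ p q, p ≠ q → Disjoint (G p) (G q))
    (hcover : ∀ i, ∃ p, i ∈ G p) (s : Finset ι) :
    #s = ∑ p, #(s ∩ G p) := by
  simp only [card_eq_sum_ones]
  exact sum_eq_sum_sum_inter_of_cover hdisj hcover s 1

end Finset

theorem mulVec_indVec_apply {m : Type*} {K : ℕ} (H : Matrix m (Fin K) ℝ)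
    (S : Finset (Fin K)) (t : m) : H.mulVec (indVec S) t = ∑ i ∈ S, H t i := by
  simp [Matrix.mulVec, dotProduct, indVec, sum_ite_mem]

theorem lvpir_grouping_scheme_general {T K P : ℕ}
    (H : Matrix (Fin T) (Fin K) ℝ)
    (G : Fin P → Finset (Fin K))
    (hGdisj : ∀ p p', p ≠ p' → Disjoint (G p) (G p'))
    (hGcover : ∀ k : Fin K, ∃ p, k ∈ G p)
    (hconst : ∀ p, ∀ i ∈ G p, ∀ i' ∈ G p, ∀ t, H t i = H t i')
    (M : Finset (Fin K))
    (hM : ∀ p, (M ∩ G p).card = (G p).card / Finset.univ.gcd (fun p => (G p).card)) :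
    ((M.card : ℝ))⁻¹ • H.mulVec (indVec M) = ((K : ℝ))⁻¹ • H.mulVec 1 ∧
      M.card = K / Finset.univ.gcd (fun p => (G p).card) := by
  set ρ := univ.gcd fun p => #(G p)
  have hblock (p : Fin P) : ρ * #(M ∩ G p) = #(G p) := by
    rw [hM p, Nat.mul_div_cancel' (gcd_dvd (mem_univ p))]
  have hcard : ρ * #M = K := by
    have hK := card_eq_sum_card_inter_of_cover hGdisj hGcover univ
    rw [card_eq_sum_card_inter_of_cover hGdisj hGcover, mul_sum]
    simpa only [hblock, univ_inter, card_univ, Fintype.card_fin] using hK.symm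
  have hrow (t : Fin T) : ρ • ∑ i ∈ M, H t i = ∑ i, H t i := by
    rw [sum_eq_sum_sum_inter_of_cover hGdisj hGcover, smul_sum,
      sum_eq_sum_sum_inter_of_cover hGdisj hGcover univ]
    simp only [univ_inter]
    exact sum_congr rfl fun p _ =>
      nsmul_sum_eq_sum_of_card_eq inter_subset_right (fun i hi j hj => hconst p i hi j hj t)
        (hblock p)
  rcases eq_or_ne ρ 0 with hρ | hρ
  · obtain rfl : K = 0 := by rw [← hcard, hρ, zero_mul]
    simp [Subsingleton.elim M ∅]
  refine ⟨?_, Nat.eq_div_of_mul_eq_right hρ hcard⟩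
  ext t
  have hK : (K : ℝ) = ρ * #M := by exact_mod_cast hcard.symm
  rw [Pi.smul_apply, Pi.smul_apply, mulVec_indVec_apply, Matrix.mulVec, dotProduct_one, ← hrow t,
    hK, smul_eq_mul, smul_eq_mul, nsmul_eq_mul, mul_inv, mul_mul_mul_comm,
    inv_mul_cancel₀ (Nat.cast_ne_zero.mpr hρ), one_mul]

/-- the gcd-based grouping scheme is private: if the columns of `H` are
constant on each group and `M` takes `|G_p|/ρ` indices from each group `G_p` (where
`ρ = gcd` of the group sizes), then `M` satisfies the latent-variable privacy
condition and `|M| = K/ρ`. -/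
theorem lvpir_grouping_scheme {T K P : ℕ}
    (H : Matrix (Fin T) (Fin K) ℝ)
    (G : Fin P → Finset (Fin K))
    (hGne : ∀ p, (G p).Nonempty)
    (hGdisj : ∀ p p', p ≠ p' → Disjoint (G p) (G p'))
    (hGcover : ∀ k : Fin K, ∃ p, k ∈ G p)
    (hconst : ∀ p, ∀ i ∈ G p, ∀ i' ∈ G p, ∀ t, H t i = H t i')
    (M : Finset (Fin K))
    (hM : ∀ p, (M ∩ G p).card = (G p).card / Finset.univ.gcd (fun p => (G p).card)) :
    ((M.card : ℝ))⁻¹ • H.mulVec (indVec M) = ((K : ℝ))⁻¹ • H.mulVec 1 ∧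
      M.card = K / Finset.univ.gcd (fun p => (G p).card) :=
  lvpir_grouping_scheme_general H G hGdisj hGcover hconst M hM
end

section
/- Let H be the 3×4 matrix with rows (0.3, 0.1, 0.1, 0.3), (0.4, 0.2, 0.5, 0.1), (0.3, 0.7, 0.4, 0.6). Although all four columns of H are pairwise distinct (so the gcd-grouping scheme yields ρ = 1 and cost 4), the partition L_1 = {1,2}, L_2 = {3,4} satisfies (1/2)·H·b_{L_1} = (1/2)·H·b_{L_2} = (1/4)·H·𝟙 = (0.2, 0.3, 0.5)^T, achieving average download cost 2 < 4. -/
open Matrix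

theorem indVec_univ {K : ℕ} : indVec (Finset.univ : Finset (Fin K)) = 1 := by
  ext i
  simp [indVec]

theorem mulVec_indVec {m : Type*} {K : ℕ} (A : Matrix m (Fin K) ℝ) (S : Finset (Fin K)) :
    A *ᵥ indVec S = fun i => ∑ j ∈ S, A i j := by
  ext i
  simp [mulVec, dotProduct, indVec]

/-- an example where the exhaustive-search scheme beats the grouping scheme:
all four columns of `H` are pairwise distinct, yet the partition `{1,2},{3,4}` satisfies
the latent-variable privacy condition with posteriors equal to the prior `(0.2,0.3,0.5)`,
achieving average download cost `2 < 4`. -/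
theorem lvpir_exhaustive_beats_grouping :
    let H : Matrix (Fin 3) (Fin 4) ℝ :=
      !![0.3, 0.1, 0.1, 0.3; 0.4, 0.2, 0.5, 0.1; 0.3, 0.7, 0.4, 0.6]
    (∀ i j : Fin 4, i ≠ j → (fun t => H t i) ≠ (fun t => H t j)) ∧
    ((2 : ℝ))⁻¹ • H.mulVec (indVec ({0, 1} : Finset (Fin 4))) = ![0.2, 0.3, 0.5] ∧
    ((2 : ℝ))⁻¹ • H.mulVec (indVec ({2, 3} : Finset (Fin 4))) = ![0.2, 0.3, 0.5] ∧
    ((4 : ℝ))⁻¹ • H.mulVec 1 = ![0.2, 0.3, 0.5] ∧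
    ((4 : ℝ))⁻¹ * ((2 : ℝ) ^ 2 + (2 : ℝ) ^ 2) = 2 ∧
    (2 : ℝ) < 4 := by
  intro H
  have columns_distinct : ∀ i j : Fin 4, i ≠ j → (fun t => H t i) ≠ (fun t => H t j) := by
    intro i j hij hcol
    have h01 : (H 0 i, H 1 i) = (H 0 j, H 1 j) := by rw [congrFun hcol 0, congrFun hcol 1]
    fin_cases i <;> fin_cases j <;> first | exact hij rfl | norm_num [H] at h01
  refine ⟨columns_distinct, ?_, ?_, ?_, by norm_num, by norm_num⟩
  on_goal 3 => rw [← indVec_univ]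
  all_goals
    rw [mulVec_indVec]
    ext t
    fin_cases t <;> simp [H, Fin.sum_univ_four] <;> norm_num
end
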